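/- arXiv:1703.07276 — 8 statements merged into one kernel-verified Lean document; each statement's English description precedes it below -/
import Mathlib

section
/- For 0 < r < 1 and μ > 0, the gamma density g(x; r, μ) = μ^r x^{r-1} e^{-μx}/Γ(r) admits the mixed exponential representation g(x; r, μ) = ∫_0^∞ z e^{-zx} p(z; r, μ) dz for all x > 0, where p(z; r, μ) = μ^r / (Γ(1-r) Γ(r)) · 1{z ≥ μ} / ((z - μ)^r z). -/
/-!
On `z > μ` the weight `z * p(z; r, μ)` is `C * (z - μ) ^ (-r)` with
`C = μ ^ r / (Γ(1 - r) Γ(r))`, so the shift `t = z - μ` turns the mixture into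
`C * exp (-μ x) * ∫₀^∞ t ^ (-r) * exp (-x t) dt = C * exp (-μ x) * Γ(1 - r) * x ^ (r - 1)`,
and `Γ(1 - r)` cancels.
-/

open MeasureTheory Real Set

theorem integral_comp_add_right_Ioi {E : Type*} [NormedAddCommGroup E] [NormedSpace ℝ E]
    (f : ℝ → E) (a b : ℝ) :
    ∫ t in Ioi b, f (t + a) = ∫ z in Ioi (b + a), f z := by
  rw [← image_add_const_Ioi,
    (measurePreserving_add_right volume a).setIntegral_image_emb (measurableEmbedding_addRight a)]

theorem integral_sub_rpow_mul_exp_neg_mul_Ioi (c : ℝ) {a r : ℝ} (ha : 0 < a) (hr : 0 < r) :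
    ∫ z in Ioi c, (z - c) ^ (a - 1) * exp (-(r * z)) = exp (-(r * c)) * ((1 / r) ^ a * Gamma a) := by
  have hshift : ∀ t, (t + c - c) ^ (a - 1) * exp (-(r * (t + c))) =
      exp (-(r * c)) * (t ^ (a - 1) * exp (-(r * t))) := fun t => by
    rw [add_sub_cancel_right, mul_add, neg_add, exp_add]
    ring
  rw [← zero_add c, ← integral_comp_add_right_Ioi, zero_add]
  simp_rw [hshift]
  rw [integral_const_mul, integral_rpow_mul_exp_neg_mul_Ioi ha hr]

noncomputable def gleserMixingDensity (r μ z : ℝ) : ℝ :=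
  μ ^ r / (Gamma (1 - r) * Gamma r) * if μ ≤ z then 1 / ((z - μ) ^ r * z) else 0

/-- At `z = μ` both sides vanish only through `1 / 0 = 0`, using `0 ^ r = 0`. -/
theorem mul_gleserMixingDensity {r μ z : ℝ} (hr : 0 < r) (hz : 0 < z) :
    z * gleserMixingDensity r μ z =
      μ ^ r / (Gamma (1 - r) * Gamma r) * (Ioi μ).indicator (fun z => (z - μ) ^ (-r)) z := by
  unfold gleserMixingDensity
  rcases lt_trichotomy z μ with hlt | rfl | hgt
  · simp [not_le.2 hlt, hlt.le]
  · simp [zero_rpow hr.ne']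
  · have hpow : (z - μ) ^ r ≠ 0 := (rpow_pos_of_pos (sub_pos.2 hgt) r).ne'
    rw [if_pos hgt.le, indicator_of_mem (mem_Ioi.2 hgt), rpow_neg (sub_pos.2 hgt).le]
    field_simp

/-- Gleser's theorem: for `0 < r < 1`, the gamma density with shape `r` and rate `μ`
is a mixed exponential density with mixing density `p(z; r, μ)`. -/
theorem gamma_density_mixed_exponential (r μ : ℝ) (hr0 : 0 < r) (hr1 : r < 1) (hμ : 0 < μ)
    (x : ℝ) (hx : 0 < x) :
    μ ^ r * x ^ (r - 1) * Real.exp (-(μ * x)) / Real.Gamma r =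
      ∫ z in Set.Ioi (0 : ℝ),
        z * Real.exp (-(z * x)) *
          (μ ^ r / (Real.Gamma (1 - r) * Real.Gamma r) *
            (if μ ≤ z then 1 / ((z - μ) ^ r * z) else 0)) := by
  change _ = ∫ z in Ioi 0, z * exp (-(z * x)) * gleserMixingDensity r μ z
  set C := μ ^ r / (Gamma (1 - r) * Gamma r)
  have hintegrand : ∀ z ∈ Ioi (0 : ℝ), z * exp (-(z * x)) * gleserMixingDensity r μ z =
      C * (Ioi μ).indicator (fun z => (z - μ) ^ ((1 - r) - 1) * exp (-(x * z))) z := by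
    intro z hz
    rw [mul_right_comm, mul_gleserMixingDensity hr0 hz, sub_sub_cancel_left, indicator_mul_left,
      mul_comm x z, mul_assoc]
  rw [setIntegral_congr_fun measurableSet_Ioi hintegrand, integral_const_mul,
    setIntegral_indicator measurableSet_Ioi, inter_eq_right.2 (Ioi_subset_Ioi hμ.le),
    integral_sub_rpow_mul_exp_neg_mul_Ioi μ (sub_pos.2 hr1) hx]
  have hΓ : Gamma (1 - r) ≠ 0 := (Gamma_pos_of_pos (sub_pos.2 hr1)).ne'
  have hΓr : Gamma r ≠ 0 := (Gamma_pos_of_pos hr0).ne'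
  have hx_pow : (1 / x) ^ (1 - r) = x ^ (r - 1) := by
    rw [one_div, inv_rpow hx.le, ← rpow_neg hx.le, neg_sub]
  rw [hx_pow, mul_comm x μ]
  simp only [C]
  field_simp
end

section
/- The function p(z; r, μ) = μ^r / (Γ(1-r) Γ(r)) · 1{z ≥ μ} / ((z - μ)^r z), for 0 < r < 1 and μ > 0, is a probability density on (0, ∞): it is nonnegative and integrates to 1. -/
/-!
The substitution `z = μ / u` maps `(0, 1)` onto `(μ, ∞)` and turns
`∫_μ^∞ (z - μ)^(a-1) z^(-(a+b)) dz` into `μ^(-b) ∫_0^1 u^(b-1) (1-u)^(a-1) du = μ^(-b) B(b, a)`.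
For `a = 1 - r`, `b = r` this is `μ^(-r) Γ(1-r) Γ(r)`, since `Γ(1) = 1`, which is exactly
the reciprocal of the normalising constant.
-/

open MeasureTheory Real Set

theorem integral_rpow_mul_one_sub_rpow {a b : ℝ} (ha : 0 < a) (hb : 0 < b) :
    ∫ x in (0 : ℝ)..1, x ^ (a - 1) * (1 - x) ^ (b - 1) = Gamma a * Gamma b / Gamma (a + b) := by
  have hB : Complex.betaIntegral a b = ↑(∫ x in (0 : ℝ)..1, x ^ (a - 1) * (1 - x) ^ (b - 1)) := by
    rw [Complex.betaIntegral, ← intervalIntegral.integral_ofReal]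
    refine intervalIntegral.integral_congr fun x hx => ?_
    rw [uIcc_of_le zero_le_one] at hx
    push_cast
    rw [Complex.ofReal_cpow hx.1, Complex.ofReal_cpow (sub_nonneg.2 hx.2)]
    push_cast; rfl
  apply Complex.ofReal_injective
  rw [← hB, Complex.betaIntegral_eq_Gamma_mul_div _ _ (by simpa) (by simpa)]
  push_cast [← Complex.Gamma_ofReal]
  rfl

theorem image_div_Ioo_zero_one {μ : ℝ} (hμ : 0 < μ) : (fun u => μ / u) '' Ioo 0 1 = Ioi μ := by
  ext z
  constructor
  · rintro ⟨u, ⟨hu0, hu1⟩, rfl⟩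
    exact (lt_div_iff₀ hu0).2 (by nlinarith)
  · intro (hz : μ < z)
    have hz0 : 0 < z := hμ.trans hz
    exact ⟨μ / z, ⟨div_pos hμ hz0, (div_lt_one hz0).2 hz⟩, div_div_cancel₀ hμ.ne'⟩

theorem integral_Ioi_eq_integral_Ioo_div {E : Type*} [NormedAddCommGroup E] [NormedSpace ℝ E]
    {μ : ℝ} (hμ : 0 < μ) (g : ℝ → E) :
    ∫ z in Ioi μ, g z = ∫ u in Ioo 0 1, (μ / u ^ 2) • g (μ / u) := by
  have hderiv : ∀ u ∈ Ioo (0 : ℝ) 1,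
      HasDerivWithinAt (fun u => μ / u) (-(μ / u ^ 2)) (Ioo 0 1) u := by
    intro u hu
    simpa [div_eq_mul_inv] using ((hasDerivAt_inv hu.1.ne').const_mul μ).hasDerivWithinAt
  have hinj : InjOn (fun u => μ / u) (Ioo 0 1) := fun u hu v hv h =>
    inv_injective (mul_left_cancel₀ hμ.ne' (by simpa [div_eq_mul_inv] using h))
  rw [← image_div_Ioo_zero_one hμ,
    integral_image_eq_integral_abs_deriv_smul measurableSet_Ioo hderiv hinj]
  refine setIntegral_congr_fun measurableSet_Ioo fun u hu => ?_
  rw [abs_neg, abs_of_pos (by have := hu.1; positivity)]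

theorem integral_Ioi_sub_rpow_mul_rpow {a b μ : ℝ} (ha : 0 < a) (hb : 0 < b) (hμ : 0 < μ) :
    ∫ z in Ioi μ, (z - μ) ^ (a - 1) * z ^ (-(a + b)) =
      μ ^ (-b) * (Gamma a * Gamma b / Gamma (a + b)) := by
  have hsubst : ∀ u ∈ Ioo (0 : ℝ) 1, (μ / u ^ 2) • ((μ / u - μ) ^ (a - 1) * (μ / u) ^ (-(a + b)))
      = μ ^ (-b) * (u ^ (b - 1) * (1 - u) ^ (a - 1)) := by
    rintro u ⟨hu0, hu1⟩
    have hμ_pow : μ ^ (-b) = μ ^ (1 : ℝ) * μ ^ (a - 1) * μ ^ (-(a + b)) := by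
      rw [← rpow_add hμ, ← rpow_add hμ]; ring_nf
    have hu_pow : u ^ (b - 1) = u ^ (-2 : ℝ) * u ^ (-(a - 1)) * u ^ (a + b) := by
      rw [← rpow_add hu0, ← rpow_add hu0]; ring_nf
    rw [show μ / u - μ = μ * (1 - u) / u by field_simp, smul_eq_mul,
      div_rpow (by nlinarith) hu0.le, mul_rpow hμ.le (by linarith), div_rpow hμ.le hu0.le,
      hμ_pow, hu_pow, rpow_neg hu0.le, rpow_neg hu0.le, rpow_neg hu0.le, rpow_one, rpow_two]
    field_simp
  rw [integral_Ioi_eq_integral_Ioo_div hμ, setIntegral_congr_fun measurableSet_Ioo hsubst,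
    integral_const_mul, ← integral_Ioc_eq_integral_Ioo,
    ← intervalIntegral.integral_of_le zero_le_one,
    integral_rpow_mul_one_sub_rpow hb ha, mul_comm (Gamma b), add_comm b]

theorem setIntegral_Ioi_zero_ite_le {E : Type*} [NormedAddCommGroup E] [NormedSpace ℝ E]
    {μ : ℝ} (hμ : 0 < μ) (f : ℝ → E) :
    ∫ z in Ioi 0, (if μ ≤ z then f z else 0) = ∫ z in Ioi μ, f z := by
  have hind : (fun z => if μ ≤ z then f z else 0) = (Ici μ).indicator f := by
    ext z; simp only [indicator_apply, mem_Ici]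
  rw [hind, setIntegral_indicator measurableSet_Ici,
    inter_eq_right.2 (Ici_subset_Ioi.2 hμ), integral_Ici_eq_integral_Ioi]

/-- The Gleser mixing function `p(z; r, μ)` is a probability density on `(0, ∞)`:
it is nonnegative and integrates to one. -/
theorem gleser_mixing_is_density (r μ : ℝ) (hr0 : 0 < r) (hr1 : r < 1) (hμ : 0 < μ) :
    (∀ z : ℝ,
        0 ≤ μ ^ r / (Real.Gamma (1 - r) * Real.Gamma r) *
          (if μ ≤ z then 1 / ((z - μ) ^ r * z) else 0)) ∧
      ∫ z in Set.Ioi (0 : ℝ),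
          μ ^ r / (Real.Gamma (1 - r) * Real.Gamma r) *
            (if μ ≤ z then 1 / ((z - μ) ^ r * z) else 0) = 1 := by
  have hΓ₁ : 0 < Gamma (1 - r) := Gamma_pos_of_pos (by linarith)
  have hΓ₂ : 0 < Gamma r := Gamma_pos_of_pos hr0
  have hkernel : ∫ z in Ioi μ, 1 / ((z - μ) ^ r * z) = μ ^ (-r) * (Gamma (1 - r) * Gamma r) := by
    have h := integral_Ioi_sub_rpow_mul_rpow (a := 1 - r) (b := r) (by linarith) hr0 hμ
    rw [sub_add_cancel, Gamma_one, div_one] at h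
    rw [← h]
    refine setIntegral_congr_fun measurableSet_Ioi fun z (hz : μ < z) => ?_
    rw [sub_sub_cancel_left, rpow_neg (sub_nonneg.2 hz.le), rpow_neg_one, one_div, mul_inv]
  refine ⟨fun z => ?_, ?_⟩
  · split_ifs with hz
    · have : 0 < z := hμ.trans_le hz
      positivity
    · simp
  · rw [integral_const_mul, setIntegral_Ioi_zero_ite_le hμ, hkernel, rpow_neg hμ.le]
    field_simp
end

section
/- A gamma distribution with shape parameter r > 1 cannot be represented as a mixed exponential distribution; that is, there is no probability measure ν on (0,∞) such that g(x; r, μ) = ∫_0^∞ z e^{-zx} dν(z) for all x > 0. -/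
/-!
A mixed exponential density `x ↦ ∫ z e^{-zx} dν(z)` is non-increasing on `(0, ∞)`, since each
`z e^{-zx}` with `z > 0` is. The gamma density with shape `r > 1` is positive at `x = 1` but tends
to `0` as `x → 0⁺`, so it is not non-increasing.
-/

open MeasureTheory Real Set Filter Topology

lemma integral_mul_exp_neg_mul_le_of_le {ν : Measure ℝ} (hν : ∀ᵐ z ∂ν, 0 ≤ z) {x y : ℝ}
    (hxy : x ≤ y) (hint : Integrable (fun z => z * exp (-(z * x))) ν) :
    ∫ z, z * exp (-(z * y)) ∂ν ≤ ∫ z, z * exp (-(z * x)) ∂ν := by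
  refine integral_mono_of_nonneg (hν.mono fun z hz => by positivity) hint (hν.mono fun z hz => ?_)
  have : z * x ≤ z * y := mul_le_mul_of_nonneg_left hxy hz
  exact mul_le_mul_of_nonneg_left (exp_le_exp.2 (neg_le_neg this)) hz

lemma tendsto_gamma_density_nhds_zero {r : ℝ} (hr : 1 < r) (μ : ℝ) :
    Tendsto (fun x : ℝ => μ ^ r * x ^ (r - 1) * exp (-(μ * x)) / Gamma r) (𝓝 0) (𝓝 0) := by
  have hcont : ContinuousAt (fun x : ℝ => μ ^ r * x ^ (r - 1) * exp (-(μ * x)) / Gamma r) 0 :=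
    ((continuousAt_const.mul (continuousAt_rpow_const 0 (r - 1) (Or.inr (by linarith)))).mul
      (by fun_prop)).div_const _
  simpa [zero_rpow (sub_ne_zero_of_ne hr.ne')] using hcont.tendsto

/-- A gamma distribution with shape parameter `r > 1` cannot be represented as a
mixed exponential distribution. -/
theorem gamma_shape_gt_one_not_mixed_exponential (r μ : ℝ) (hr : 1 < r) (hμ : 0 < μ) :
    ¬ ∃ ν : Measure ℝ, IsProbabilityMeasure ν ∧ ν (Set.Ioi (0 : ℝ))ᶜ = 0 ∧
      ∀ x : ℝ, 0 < x →
        μ ^ r * x ^ (r - 1) * Real.exp (-(μ * x)) / Real.Gamma r =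
          ∫ z, z * Real.exp (-(z * x)) ∂ν := by
  rintro ⟨ν, -, hν, h⟩
  set g : ℝ → ℝ := fun x => μ ^ r * x ^ (r - 1) * exp (-(μ * x)) / Gamma r
  have hg_pos : ∀ x, 0 < x → 0 < g x := fun x hx => by
    have := Gamma_pos_of_pos (zero_lt_one.trans hr)
    positivity
  have hν_nonneg : ∀ᵐ z ∂ν, 0 ≤ z :=
    (show ∀ᵐ z ∂ν, z ∈ Ioi 0 from mem_ae_iff.2 hν).mono fun _ hz => le_of_lt hz
  have hg_ge : ∀ x ∈ Ioc (0 : ℝ) 1, g 1 ≤ g x := fun x ⟨hx, hx1⟩ => by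
    have hint : Integrable (fun z => z * exp (-(z * x))) ν :=
      Integrable.of_integral_ne_zero ((h x hx).symm ▸ (hg_pos x hx).ne')
    simpa only [g, h x hx, h 1 one_pos] using
      integral_mul_exp_neg_mul_le_of_le hν_nonneg hx1 hint
  obtain ⟨x, hx_lt, hx_mem⟩ :=
    (((tendsto_gamma_density_nhds_zero hr μ).mono_left nhdsWithin_le_nhds).eventually_lt_const
      (hg_pos 1 one_pos)).and (Ioc_mem_nhdsGT one_pos) |>.exists
  exact (hg_ge x hx_mem).not_gt hx_lt
end

section
/- Let 0 < r < 1 and μ > 0, and let G_{r,1}, G_{1−r,1} be independent gamma random variables with shapes r, 1−r and rate 1. Then the random variable Z_{r,μ} = μ(G_{r,1} + G_{1−r,1})/G_{r,1} has probability density p(z; r, μ) = μ^r/(Γ(1−r)Γ(r)) · 1{z ≥ μ}/((z−μ)^r z) on (0,∞). -/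
open MeasureTheory ProbabilityTheory Real Set

open scoped ENNReal

/-!
Almost surely `G₁ > 0`, so `Z = μ (1 + W)` with `W = G₂ / G₁`. The ratio of independent variables
with densities `f` (supported on `(0, ∞)`) and `g` has density `w ↦ ∫ x f(x) g(x w) dx`; for gamma
variables of shapes `b` and `a` the integrand is, in `x`, a gamma kernel of shape `a + b` and rate
`1 + w`, so `W` has the beta-prime density `w^(a-1) (1 + w)^(-(a+b)) / B(a, b)`. Here `a = 1 - r`,
`b = r`, hence `a + b = 1`, and the affine change `z = μ (1 + w)` turns `w^(-r) / (1 + w)` into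
`μ^r / ((z - μ)^r z)`.
-/

lemma ofReal_mul_lintegral_comp_mul_left {c : ℝ} (hc : 0 < c) (g : ℝ → ℝ≥0∞) :
    ENNReal.ofReal c * ∫⁻ w, g (c * w) = ∫⁻ y, g y := by
  rw [← (measurableEmbedding_mulLeft₀ hc.ne').lintegral_map, Real.map_volume_mul_left hc.ne',
    lintegral_smul_measure, abs_of_pos (inv_pos.2 hc), smul_eq_mul, ← mul_assoc,
    ← ENNReal.ofReal_mul hc.le, mul_inv_cancel₀ hc.ne', ENNReal.ofReal_one, one_mul]

lemma map_div_prod_withDensity {f g : ℝ → ℝ≥0∞} (hf : Measurable f) (hg : Measurable g)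
    (hf0 : ∀ x ≤ 0, f x = 0) :
    ((volume.withDensity f).prod (volume.withDensity g)).map (fun p => p.2 / p.1) =
      volume.withDensity fun w => ∫⁻ x, f x * (ENNReal.ofReal x * g (x * w)) := by
  have hφ : Measurable fun p : ℝ × ℝ => p.2 / p.1 := by fun_prop
  ext s hs
  have slice : ∀ x, f x * ∫⁻ y, g y * s.indicator 1 (y / x) =
      ∫⁻ w, f x * (ENNReal.ofReal x * g (x * w)) * s.indicator 1 w := by
    intro x
    rcases le_or_gt x 0 with hx | hx
    · simp [hf0 x hx]
    rw [← ofReal_mul_lintegral_comp_mul_left hx, ← lintegral_const_mul' _ _ ENNReal.ofReal_ne_top,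
      ← lintegral_const_mul _ (by fun_prop)]
    refine lintegral_congr fun w => ?_
    rw [mul_div_cancel_left₀ w hx.ne']
    ring
  calc ((volume.withDensity f).prod (volume.withDensity g)).map (fun p => p.2 / p.1) s
      = ∫⁻ x, ∫⁻ y, s.indicator 1 (y / x) ∂volume.withDensity g ∂volume.withDensity f := by
        rw [Measure.map_apply hφ hs, ← lintegral_indicator_one (hφ hs)]
        exact lintegral_prod (fun p : ℝ × ℝ => s.indicator 1 (p.2 / p.1)) (by fun_prop)
    _ = ∫⁻ x, ∫⁻ w, f x * (ENNReal.ofReal x * g (x * w)) * s.indicator 1 w := by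
        rw [lintegral_withDensity_eq_lintegral_mul _ hf (by fun_prop)]
        refine lintegral_congr fun x => ?_
        rw [Pi.mul_apply, lintegral_withDensity_eq_lintegral_mul _ hg (by fun_prop)]
        exact slice x
    _ = ∫⁻ w, (∫⁻ x, f x * (ENNReal.ofReal x * g (x * w))) * s.indicator 1 w := by
        rw [lintegral_lintegral_swap (by fun_prop)]
        exact lintegral_congr fun w => lintegral_mul_const _ (by fun_prop)
    _ = _ := by
        rw [withDensity_apply _ hs, ← lintegral_indicator hs]
        refine lintegral_congr fun w => ?_
        by_cases hw : w ∈ s <;> simp [hw]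

lemma map_const_add_mul_withDensity (h : ℝ → ℝ≥0∞) (a : ℝ) {c : ℝ} (hc : 0 < c) :
    (volume.withDensity h).map (fun w => a + c * w) =
      volume.withDensity fun z => ENNReal.ofReal c⁻¹ * h ((z - a) / c) := by
  have hψ : Measurable fun w : ℝ => a + c * w := by fun_prop
  ext s hs
  set F : ℝ → ℝ≥0∞ := fun z => ENNReal.ofReal c⁻¹ * h ((z - a) / c)
  have hF : ∀ w, ENNReal.ofReal c * F (a + c * w) = h w := fun w => by
    rw [show F (a + c * w) = ENNReal.ofReal c⁻¹ * h w by simp [F, hc.ne'], ← mul_assoc,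
      ← ENNReal.ofReal_mul hc.le, mul_inv_cancel₀ hc.ne', ENNReal.ofReal_one, one_mul]
  symm
  calc volume.withDensity F s = ∫⁻ z, s.indicator F z := by
        rw [withDensity_apply _ hs, lintegral_indicator hs]
    _ = ENNReal.ofReal c * ∫⁻ w, s.indicator F (a + c * w) := by
        rw [← lintegral_add_left_eq_self _ a]
        exact (ofReal_mul_lintegral_comp_mul_left hc fun y => s.indicator F (a + y)).symm
    _ = ∫⁻ w, ((fun w => a + c * w) ⁻¹' s).indicator h w := by
        rw [← lintegral_const_mul' _ _ ENNReal.ofReal_ne_top]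
        refine lintegral_congr fun w => ?_
        by_cases hw : a + c * w ∈ s
        · rw [indicator_of_mem hw, indicator_of_mem (show w ∈ (fun w => a + c * w) ⁻¹' s from hw),
            hF]
        · rw [indicator_of_notMem hw, mul_zero,
            indicator_of_notMem (show w ∉ (fun w => a + c * w) ⁻¹' s from hw)]
    _ = _ := by
        rw [lintegral_indicator (hψ hs), Measure.map_apply hψ hs, withDensity_apply _ (hψ hs)]

lemma ae_pos_of_map_eq_withDensity {Ω : Type*} [MeasurableSpace Ω] {P : Measure Ω}
    {X : Ω → ℝ} {f : ℝ → ℝ≥0∞} (hX : Measurable X) (hf : Measurable f)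
    (hmap : P.map X = volume.withDensity f) (hf0 : ∀ x ≤ 0, f x = 0) :
    ∀ᵐ ω ∂P, 0 < X ω := by
  refine ae_of_ae_map hX.aemeasurable ?_
  rw [hmap, ae_withDensity_iff hf]
  exact .of_forall fun x hx => not_le.1 fun h => hx (hf0 x h)

-- Mathlib's `gammaPDF a 1` except at `0`; this form matches the hypotheses of the theorem verbatim.
noncomputable def gammaDensity (a x : ℝ) : ℝ≥0∞ :=
  ENNReal.ofReal (if 0 < x then x ^ (a - 1) * exp (-x) / Gamma a else 0)

noncomputable def betaPrimeDensity (a b w : ℝ) : ℝ≥0∞ :=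
  ENNReal.ofReal (if 0 < w then
    Gamma (a + b) / (Gamma a * Gamma b) * (w ^ (a - 1) * (1 + w) ^ (-(a + b))) else 0)

@[fun_prop]
lemma measurable_gammaDensity (a : ℝ) : Measurable (gammaDensity a) :=
  (Measurable.ite measurableSet_Ioi (by fun_prop) measurable_const).ennreal_ofReal

lemma gammaDensity_of_nonpos (a : ℝ) {x : ℝ} (hx : x ≤ 0) : gammaDensity a x = 0 := by
  simp [gammaDensity, hx.not_gt]

lemma lintegral_ofReal_rpow_mul_exp_neg_mul_Ioi {s b : ℝ} (hs : 0 < s) (hb : 0 < b) :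
    ∫⁻ x in Ioi 0, ENNReal.ofReal (x ^ (s - 1) * exp (-(b * x))) =
      ENNReal.ofReal ((1 / b) ^ s * Gamma s) := by
  have h := integral_rpow_mul_exp_neg_mul_Ioi hs hb
  -- A non-integrable function would have Bochner integral `0`.
  have hint : IntegrableOn (fun x : ℝ => x ^ (s - 1) * exp (-(b * x))) (Ioi 0) :=
    .of_integral_ne_zero (h ▸ by positivity)
  rw [← h, ofReal_integral_eq_lintegral_ofReal hint]
  filter_upwards [ae_restrict_mem measurableSet_Ioi] with x hx
  exact mul_nonneg (rpow_nonneg hx.le _) (exp_pos _).le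

lemma gammaDensity_mul_gammaDensity_comp_mul {a b x w : ℝ} (ha : 0 < a) (hb : 0 < b)
    (hx : 0 < x) (hw : 0 < w) :
    gammaDensity b x * (ENNReal.ofReal x * gammaDensity a (x * w)) =
      ENNReal.ofReal (w ^ (a - 1) / (Gamma a * Gamma b)) *
        ENNReal.ofReal (x ^ (a + b - 1) * exp (-((1 + w) * x))) := by
  have hxw : 0 < x * w := mul_pos hx hw
  simp only [gammaDensity, if_pos hx, if_pos hxw]
  rw [← ENNReal.ofReal_mul hx.le, ← ENNReal.ofReal_mul (by positivity),
    ← ENNReal.ofReal_mul (by positivity)]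
  congr 1
  rw [mul_rpow hx.le hw.le, show a + b - 1 = (b - 1) + 1 + (a - 1) by ring,
    rpow_add hx, rpow_add hx, rpow_one, add_mul, one_mul, mul_comm w x, neg_add, exp_add]
  ring

lemma lintegral_gammaDensity_mul_gammaDensity_comp_mul {a b : ℝ} (ha : 0 < a) (hb : 0 < b)
    (w : ℝ) :
    ∫⁻ x, gammaDensity b x * (ENNReal.ofReal x * gammaDensity a (x * w)) =
      betaPrimeDensity a b w := by
  rcases le_or_gt w 0 with hw | hw
  · have hzero : ∀ x, gammaDensity b x * (ENNReal.ofReal x * gammaDensity a (x * w)) = 0 := by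
      intro x
      rcases le_or_gt x 0 with hx | hx
      · rw [gammaDensity_of_nonpos b hx, zero_mul]
      · rw [gammaDensity_of_nonpos a (mul_nonpos_of_nonneg_of_nonpos hx.le hw), mul_zero, mul_zero]
    simp [hzero, betaPrimeDensity, hw.not_gt]
  calc ∫⁻ x, gammaDensity b x * (ENNReal.ofReal x * gammaDensity a (x * w))
      = ∫⁻ x in Ioi 0, ENNReal.ofReal (w ^ (a - 1) / (Gamma a * Gamma b)) *
          ENNReal.ofReal (x ^ (a + b - 1) * exp (-((1 + w) * x))) := by
        rw [← lintegral_indicator measurableSet_Ioi]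
        refine lintegral_congr fun x => ?_
        rcases le_or_gt x 0 with hx | hx
        · rw [indicator_of_notMem (show x ∉ Ioi 0 from not_lt.2 hx),
            gammaDensity_of_nonpos b hx, zero_mul]
        · rw [indicator_of_mem (show x ∈ Ioi 0 from hx),
            gammaDensity_mul_gammaDensity_comp_mul ha hb hx hw]
    _ = ENNReal.ofReal (w ^ (a - 1) / (Gamma a * Gamma b)) *
          ENNReal.ofReal ((1 / (1 + w)) ^ (a + b) * Gamma (a + b)) := by
        rw [lintegral_const_mul' _ _ ENNReal.ofReal_ne_top,
          lintegral_ofReal_rpow_mul_exp_neg_mul_Ioi (add_pos ha hb) (by positivity)]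
    _ = betaPrimeDensity a b w := by
        rw [betaPrimeDensity, if_pos hw, ← ENNReal.ofReal_mul (by positivity), one_div,
          inv_rpow (by positivity), ← rpow_neg (by positivity)]
        congr 1
        ring

lemma map_div_prod_gammaDensity {a b : ℝ} (ha : 0 < a) (hb : 0 < b) :
    ((volume.withDensity (gammaDensity b)).prod (volume.withDensity (gammaDensity a))).map
        (fun p => p.2 / p.1) = volume.withDensity (betaPrimeDensity a b) := by
  rw [map_div_prod_withDensity (measurable_gammaDensity b) (measurable_gammaDensity a)
    fun _ => gammaDensity_of_nonpos b]
  simp_rw [lintegral_gammaDensity_mul_gammaDensity_comp_mul ha hb]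

lemma ofReal_inv_mul_betaPrimeDensity_sub_div {r μ : ℝ} (hr : 0 < r) (hμ : 0 < μ) (z : ℝ) :
    ENNReal.ofReal μ⁻¹ * betaPrimeDensity (1 - r) r ((z - μ) / μ) =
      ENNReal.ofReal (μ ^ r / (Gamma (1 - r) * Gamma r) *
        (if μ ≤ z then 1 / ((z - μ) ^ r * z) else 0)) := by
  rcases le_or_gt z μ with hz | hz
  · have hw : ¬ 0 < (z - μ) / μ := not_lt.2 (div_nonpos_of_nonpos_of_nonneg (by linarith) hμ.le)
    rcases hz.lt_or_eq with hz | rfl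
    · simp [betaPrimeDensity, hw, hz.not_ge]
    · simp [betaPrimeDensity, zero_rpow hr.ne']
  have hzμ : 0 < z - μ := sub_pos.2 hz
  rw [betaPrimeDensity, if_pos (div_pos hzμ hμ), ← ENNReal.ofReal_mul (inv_pos.2 hμ).le,
    if_pos hz.le, sub_add_cancel, Gamma_one, show 1 - r - 1 = -r by ring, rpow_neg_one,
    div_rpow hzμ.le hμ.le, rpow_neg hzμ.le, rpow_neg hμ.le]
  congr 1
  have : (z - μ) ^ r ≠ 0 := (rpow_pos_of_pos hzμ r).ne'
  have : μ ^ r ≠ 0 := (rpow_pos_of_pos hμ r).ne'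
  have : z ≠ 0 := (hμ.trans hz).ne'
  field_simp
  ring

/-- For `0 < r < 1` and `μ > 0`, the random variable
`Z = μ (G₁ + G₂) / G₁`, with `G₁, G₂` independent gamma variables of shapes `r`, `1-r`
and rate 1, has the Gleser density `p(z; r, μ)`. -/
theorem gleser_mixing_rv_density {Ω : Type*} [MeasurableSpace Ω] (P : Measure Ω)
    [IsProbabilityMeasure P] (G₁ G₂ : Ω → ℝ) (hG₁ : Measurable G₁) (hG₂ : Measurable G₂)
    (r μ : ℝ) (hr0 : 0 < r) (hr1 : r < 1) (hμ : 0 < μ)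
    (h₁ : Measure.map G₁ P = volume.withDensity fun x =>
      ENNReal.ofReal (if 0 < x then x ^ (r - 1) * Real.exp (-x) / Real.Gamma r else 0))
    (h₂ : Measure.map G₂ P = volume.withDensity fun x =>
      ENNReal.ofReal (if 0 < x then x ^ ((1 - r) - 1) * Real.exp (-x) / Real.Gamma (1 - r) else 0))
    (hindep : IndepFun G₁ G₂ P) :
    Measure.map (fun ω => μ * (G₁ ω + G₂ ω) / G₁ ω) P = volume.withDensity fun z =>
      ENNReal.ofReal
        (μ ^ r / (Real.Gamma (1 - r) * Real.Gamma r) *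
          (if μ ≤ z then 1 / ((z - μ) ^ r * z) else 0)) := by
  have hlaw₁ : P.map G₁ = volume.withDensity (gammaDensity r) := h₁
  have hlaw₂ : P.map G₂ = volume.withDensity (gammaDensity (1 - r)) := h₂
  have hG₁pos : ∀ᵐ ω ∂P, 0 < G₁ ω :=
    ae_pos_of_map_eq_withDensity hG₁ (measurable_gammaDensity r) hlaw₁
      fun _ => gammaDensity_of_nonpos r
  have hZ : (fun ω => μ * (G₁ ω + G₂ ω) / G₁ ω) =ᵐ[P]
      (fun w => μ + μ * w) ∘ (fun p : ℝ × ℝ => p.2 / p.1) ∘ fun ω => (G₁ ω, G₂ ω) :=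
    hG₁pos.mono fun ω hω => by
      simp only [Function.comp_apply]
      field_simp
  have hjoint : P.map (fun ω => (G₁ ω, G₂ ω)) =
      (volume.withDensity (gammaDensity r)).prod (volume.withDensity (gammaDensity (1 - r))) := by
    rw [← hlaw₁, ← hlaw₂]
    exact (indepFun_iff_map_prod_eq_prod_map_map hG₁.aemeasurable hG₂.aemeasurable).mp hindep
  rw [Measure.map_congr hZ, ← Measure.map_map (by fun_prop) (by fun_prop),
    ← Measure.map_map (by fun_prop) (hG₁.prodMk hG₂), hjoint,
    map_div_prod_gammaDensity (sub_pos.2 hr1) hr0, map_const_add_mul_withDensity _ μ hμ]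
  simp_rw [ofReal_inv_mul_betaPrimeDensity_sub_div hr0 hμ]
end

section
/- For 0 < β < α ≤ 1, the β-th moment of the one-sided strictly stable random variable S_{α,1} equals E[S_{α,1}^β] = Γ(1 − β/α)/Γ(1 − β). -/
open MeasureTheory Real Set

/-!
For `0 < c < p` and `b > 0`, integrating by parts against the Gamma integral gives
`∫₀^∞ s^(-c-1) (1 - exp (-b s^p)) ds = Γ(1 - c/p) / c * b^(c/p)`.
With `p = 1` this represents `x^c = c / Γ(1 - c) * ∫₀^∞ s^(-c-1) (1 - exp (-s x)) ds` for `x ≥ 0`;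
applied to `x = S` and combined with Tonelli, it turns `E[S^β]` into
`β / Γ(1 - β) * ∫₀^∞ s^(-β-1) (1 - E[exp (-s S)]) ds`. Substituting `E[exp (-s S)] = exp (-s^α)`,
the case `p = α`, `b = 1` evaluates the last integral to `Γ(1 - β/α) / β`.
-/

open Filter Topology

lemma one_sub_exp_neg_mul_nonneg {b x : ℝ} (h : 0 ≤ b * x) : 0 ≤ 1 - exp (-b * x) :=
  sub_nonneg.2 (exp_le_one_iff.2 (by rw [neg_mul]; exact neg_nonpos.2 h))

lemma one_sub_exp_neg_mul_le (b x : ℝ) : 1 - exp (-b * x) ≤ b * x := by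
  linarith [neg_mul b x ▸ one_sub_le_exp_neg (b * x)]

lemma integrableOn_rpow_mul_one_sub_exp_neg_mul_rpow {c p b : ℝ} (hc : 0 < c) (hcp : c < p)
    (hb : 0 ≤ b) : IntegrableOn (fun s : ℝ => s ^ (-c - 1) * (1 - exp (-b * s ^ p))) (Ioi 0) := by
  have hmeas : AEStronglyMeasurable (fun s : ℝ => s ^ (-c - 1) * (1 - exp (-b * s ^ p))) :=
    by fun_prop
  have hnonneg : ∀ s : ℝ, 0 < s → 0 ≤ s ^ (-c - 1) * (1 - exp (-b * s ^ p)) := fun s hs =>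
    mul_nonneg (by positivity) (one_sub_exp_neg_mul_nonneg (by positivity))
  have h0 : IntegrableOn (fun s : ℝ => s ^ (-c - 1) * (1 - exp (-b * s ^ p))) (Ioc 0 1) := by
    refine Integrable.mono' ((intervalIntegral.intervalIntegrable_rpow'
      (by linarith : (-1:ℝ) < p - c - 1)).1.const_mul b) hmeas.restrict ?_
    filter_upwards [ae_restrict_mem measurableSet_Ioc] with s hs
    obtain ⟨hs0, -⟩ := hs
    rw [norm_of_nonneg (hnonneg s hs0)]
    calc s ^ (-c - 1) * (1 - exp (-b * s ^ p)) ≤ s ^ (-c - 1) * (b * s ^ p) := by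
          gcongr; exact one_sub_exp_neg_mul_le b _
      _ = b * s ^ (p - c - 1) := by
          rw [mul_left_comm, ← rpow_add hs0]; ring_nf
  have h1 : IntegrableOn (fun s : ℝ => s ^ (-c - 1) * (1 - exp (-b * s ^ p))) (Ioi 1) := by
    refine Integrable.mono' (integrableOn_Ioi_rpow_of_lt (by linarith : -c - 1 < -1) one_pos)
      hmeas.restrict ?_
    filter_upwards [ae_restrict_mem measurableSet_Ioi] with s (hs : 1 < s)
    rw [norm_of_nonneg (hnonneg s (by linarith))]
    exact mul_le_of_le_one_right (by positivity) (by linarith [exp_pos (-b * s ^ p)])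
  simpa [Ioc_union_Ioi_eq_Ioi zero_le_one] using h0.union h1

lemma tendsto_one_sub_exp_neg_mul_rpow_mul_rpow_neg_nhdsGT_zero {c p b : ℝ} (hcp : c < p)
    (hb : 0 ≤ b) : Tendsto (fun s : ℝ => (1 - exp (-b * s ^ p)) * s ^ (-c)) (𝓝[>] 0) (𝓝 0) := by
  have hbound : Tendsto (fun s : ℝ => b * s ^ (p - c)) (𝓝[>] 0) (𝓝 0) := by
    have h := (continuousAt_rpow_const 0 (p - c) (Or.inr (by linarith))).tendsto.const_mul b
    rw [zero_rpow (by linarith), mul_zero] at h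
    exact h.mono_left nhdsWithin_le_nhds
  refine squeeze_zero' ?_ ?_ hbound <;> filter_upwards [self_mem_nhdsWithin] with s (hs : 0 < s)
  · exact mul_nonneg (one_sub_exp_neg_mul_nonneg (by positivity)) (by positivity)
  · calc (1 - exp (-b * s ^ p)) * s ^ (-c) ≤ b * s ^ p * s ^ (-c) := by
          gcongr; exact one_sub_exp_neg_mul_le b _
      _ = b * s ^ (p - c) := by rw [sub_eq_add_neg, rpow_add hs, mul_assoc]

lemma tendsto_one_sub_exp_neg_mul_rpow_mul_rpow_neg_atTop {c p b : ℝ} (hc : 0 < c) (hp : 0 < p)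
    (hb : 0 < b) : Tendsto (fun s : ℝ => (1 - exp (-b * s ^ p)) * s ^ (-c)) atTop (𝓝 0) := by
  have h : Tendsto (fun s : ℝ => -b * s ^ p) atTop atBot := by
    simpa only [neg_mul, Function.comp_def] using
      tendsto_neg_atTop_atBot.comp ((tendsto_rpow_atTop hp).const_mul_atTop hb)
  simpa using ((tendsto_exp_atBot.comp h).const_sub 1).mul (tendsto_rpow_neg_atTop hc)

lemma integral_rpow_mul_one_sub_exp_neg_mul_rpow {c p b : ℝ} (hc : 0 < c) (hcp : c < p)
    (hb : 0 < b) :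
    ∫ s in Ioi (0 : ℝ), s ^ (-c - 1) * (1 - exp (-b * s ^ p)) =
      Gamma (1 - c / p) / c * b ^ (c / p) := by
  have hp : 0 < p := hc.trans hcp
  let u : ℝ → ℝ := fun s => 1 - exp (-b * s ^ p)
  let u' : ℝ → ℝ := fun s => b * p * (s ^ (p - 1) * exp (-b * s ^ p))
  let v : ℝ → ℝ := fun s => -c⁻¹ * s ^ (-c)
  have hu : ∀ s ∈ Ioi (0 : ℝ), HasDerivAt u (u' s) s := fun s hs => by
    refine ((((hasDerivAt_rpow_const (Or.inl (ne_of_gt hs))).const_mul (-b)).exp).const_sub 1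
      ).congr_deriv ?_
    simp only [u']; ring
  have hv : ∀ s ∈ Ioi (0 : ℝ), HasDerivAt v (s ^ (-c - 1)) s := fun s hs => by
    refine ((hasDerivAt_rpow_const (Or.inl (ne_of_gt hs))).const_mul (-c⁻¹)).congr_deriv ?_
    field_simp
  have huv' : IntegrableOn (fun s => u s * s ^ (-c - 1)) (Ioi 0) :=
    (integrableOn_rpow_mul_one_sub_exp_neg_mul_rpow hc hcp hb.le).congr_fun
      (fun s _ => mul_comm _ _) measurableSet_Ioi
  have hu'v_eq : ∀ s ∈ Ioi (0 : ℝ),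
      -(b * p / c) * (s ^ (p - c - 1) * exp (-b * s ^ p)) = u' s * v s := fun s hs => by
    simp only [u', v]
    rw [show p - c - 1 = (p - 1) + -c by ring, rpow_add hs]
    ring
  have hu'v : IntegrableOn (fun s => u' s * v s) (Ioi 0) :=
    IntegrableOn.congr_fun ((integrableOn_rpow_mul_exp_neg_mul_rpow
      (by linarith : -1 < p - c - 1) hp hb).const_mul _) hu'v_eq measurableSet_Ioi
  have h_zero : Tendsto (fun s => u s * v s) (𝓝[>] 0) (𝓝 0) := by
    simpa [u, v, mul_left_comm] using
      (tendsto_one_sub_exp_neg_mul_rpow_mul_rpow_neg_nhdsGT_zero hcp hb.le).const_mul (-c⁻¹)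
  have h_infty : Tendsto (fun s => u s * v s) atTop (𝓝 0) := by
    simpa [u, v, mul_left_comm] using
      (tendsto_one_sub_exp_neg_mul_rpow_mul_rpow_neg_atTop hc hp hb).const_mul (-c⁻¹)
  have h_parts := integral_Ioi_mul_deriv_eq_deriv_mul hu hv huv' hu'v h_zero h_infty
  have h_gamma : ∫ s in Ioi (0 : ℝ), u' s * v s = -(Gamma (1 - c / p) / c * b ^ (c / p)) := by
    rw [← setIntegral_congr_fun measurableSet_Ioi hu'v_eq, integral_const_mul,
      integral_rpow_mul_exp_neg_mul_rpow hp (by linarith) hb,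
      show (p - c - 1 + 1) / p = 1 - c / p by field_simp; ring,
      show -(p - c - 1 + 1) / p = c / p - 1 by field_simp; ring, rpow_sub_one hb.ne']
    field_simp
  simp only [h_gamma, sub_zero, sub_neg_eq_add, zero_add] at h_parts
  rw [← h_parts]
  exact setIntegral_congr_fun measurableSet_Ioi fun s _ => mul_comm _ _

lemma rpow_eq_mul_integral_one_sub_exp_neg_mul {c x : ℝ} (hc0 : 0 < c) (hc1 : c < 1)
    (hx : 0 ≤ x) :
    x ^ c = c / Gamma (1 - c) * ∫ s in Ioi (0 : ℝ), s ^ (-c - 1) * (1 - exp (-(s * x))) := by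
  rcases hx.eq_or_lt with rfl | hx
  · simp [zero_rpow hc0.ne']
  have hΓ : Gamma (1 - c) ≠ 0 := (Gamma_pos_of_pos (by linarith)).ne'
  have h := integral_rpow_mul_one_sub_exp_neg_mul_rpow hc0 hc1 hx
  simp only [rpow_one, div_one, neg_mul, mul_comm x] at h
  rw [h]
  field_simp

lemma integrable_exp_neg_mul {Ω : Type*} [MeasurableSpace Ω] (P : Measure Ω) [IsFiniteMeasure P]
    {X : Ω → ℝ} (hX : Measurable X) (hX0 : ∀ᵐ ω ∂P, 0 ≤ X ω) {s : ℝ} (hs : 0 ≤ s) :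
    Integrable (fun ω => exp (-(s * X ω))) P := by
  refine .of_bound (by fun_prop) 1 ?_
  filter_upwards [hX0] with ω hω
  rw [norm_of_nonneg (exp_pos _).le, exp_le_one_iff, neg_nonpos]
  positivity

theorem lintegral_rpow_eq_lintegral_one_sub_laplace {Ω : Type*} [MeasurableSpace Ω]
    (P : Measure Ω) [IsProbabilityMeasure P] {X : Ω → ℝ} (hX : Measurable X)
    (hX0 : ∀ᵐ ω ∂P, 0 ≤ X ω) {c : ℝ} (hc0 : 0 < c) (hc1 : c < 1) :
    ∫⁻ ω, ENNReal.ofReal (X ω ^ c) ∂P = ENNReal.ofReal (c / Gamma (1 - c)) *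
      ∫⁻ s in Ioi (0 : ℝ), ENNReal.ofReal (s ^ (-c - 1) * (1 - ∫ ω, exp (-(s * X ω)) ∂P)) := by
  let F : Ω → ℝ → ℝ := fun ω s => s ^ (-c - 1) * (1 - exp (-(s * X ω)))
  have hF_nonneg : ∀ ω s, 0 ≤ X ω → 0 < s → 0 ≤ F ω s := fun ω s hω hs =>
    mul_nonneg (by positivity) (sub_nonneg.2 (exp_le_one_iff.2 (neg_nonpos.2 (by positivity))))
  have h_pointwise : ∀ᵐ ω ∂P, ENNReal.ofReal (X ω ^ c) =
      ENNReal.ofReal (c / Gamma (1 - c)) * ∫⁻ s in Ioi (0 : ℝ), ENNReal.ofReal (F ω s) := by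
    filter_upwards [hX0] with ω hω
    have hint : IntegrableOn (F ω) (Ioi 0) := by
      refine (integrableOn_rpow_mul_one_sub_exp_neg_mul_rpow hc0 (p := 1) hc1 hω).congr_fun
        (fun s _ => ?_) measurableSet_Ioi
      simp only [F, rpow_one, neg_mul, mul_comm (X ω)]
    rw [rpow_eq_mul_integral_one_sub_exp_neg_mul hc0 hc1 hω, ENNReal.ofReal_mul
      (div_nonneg hc0.le (Gamma_pos_of_pos (by linarith)).le), ofReal_integral_eq_lintegral_ofReal
      hint ((ae_restrict_mem measurableSet_Ioi).mono fun s hs => hF_nonneg ω s hω hs)]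
  have h_inner : ∀ s ∈ Ioi (0 : ℝ), ∫⁻ ω, ENNReal.ofReal (F ω s) ∂P =
      ENNReal.ofReal (s ^ (-c - 1) * (1 - ∫ ω, exp (-(s * X ω)) ∂P)) := fun s (hs : 0 < s) => by
    have hexp := integrable_exp_neg_mul P hX hX0 hs.le
    have hF_int : Integrable (fun ω => F ω s) P := ((integrable_const 1).sub hexp).const_mul _
    rw [← ofReal_integral_eq_lintegral_ofReal hF_int (hX0.mono fun ω hω => hF_nonneg ω s hω hs),
      integral_const_mul, integral_sub (integrable_const 1) hexp]
    simp
  calc ∫⁻ ω, ENNReal.ofReal (X ω ^ c) ∂P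
      = ∫⁻ ω, ENNReal.ofReal (c / Gamma (1 - c)) *
          (∫⁻ s in Ioi (0 : ℝ), ENNReal.ofReal (F ω s)) ∂P := lintegral_congr_ae h_pointwise
    _ = ENNReal.ofReal (c / Gamma (1 - c)) *
          ∫⁻ s in Ioi (0 : ℝ), ∫⁻ ω, ENNReal.ofReal (F ω s) ∂P := by
      rw [lintegral_const_mul' _ _ ENNReal.ofReal_ne_top,
        lintegral_lintegral_swap (by fun_prop)]
    _ = _ := by rw [setLIntegral_congr_fun measurableSet_Ioi h_inner]

/-- For `0 < β < α ≤ 1`, the `β`-th moment of the one-sided strictly stable random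
variable `S` with Laplace transform `exp (-s^α)` equals `Γ(1 - β/α)/Γ(1 - β)`. -/
theorem stable_moment (α β : ℝ) (hβ0 : 0 < β) (hβα : β < α) (hα1 : α ≤ 1)
    {Ω : Type*} [MeasurableSpace Ω] (P : Measure Ω) [IsProbabilityMeasure P]
    (S : Ω → ℝ) (hS : Measurable S) (hSpos : ∀ᵐ ω ∂P, 0 < S ω)
    (hLaplace : ∀ s : ℝ, 0 ≤ s →
      ∫ ω, Real.exp (-(s * S ω)) ∂P = Real.exp (-(s ^ α))) :
    ∫ ω, S ω ^ β ∂P = Real.Gamma (1 - β / α) / Real.Gamma (1 - β) := by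
  have hα0 : 0 < α := hβ0.trans hβα
  have hΓβ : 0 < Gamma (1 - β) := Gamma_pos_of_pos (by linarith)
  have hΓα : 0 < Gamma (1 - β / α) := Gamma_pos_of_pos (by rwa [sub_pos, div_lt_one hα0])
  have h_mellin : ∫⁻ s in Ioi (0 : ℝ),
      ENNReal.ofReal (s ^ (-β - 1) * (1 - ∫ ω, exp (-(s * S ω)) ∂P)) =
      ENNReal.ofReal (Gamma (1 - β / α) / β) := by
    have h := integral_rpow_mul_one_sub_exp_neg_mul_rpow hβ0 hβα one_pos
    rw [one_rpow, mul_one] at h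
    rw [← h, ofReal_integral_eq_lintegral_ofReal
      (integrableOn_rpow_mul_one_sub_exp_neg_mul_rpow hβ0 hβα zero_le_one)
      ((ae_restrict_mem measurableSet_Ioi).mono fun s (hs : 0 < s) =>
        mul_nonneg (by positivity) (one_sub_exp_neg_mul_nonneg (by positivity)))]
    refine setLIntegral_congr_fun measurableSet_Ioi fun s (hs : 0 < s) => ?_
    rw [hLaplace s hs.le, neg_one_mul]
  rw [integral_eq_lintegral_of_nonneg_ae (hSpos.mono fun ω h => by positivity)
      (hS.pow_const β).aestronglyMeasurable,
    lintegral_rpow_eq_lintegral_one_sub_laplace P hS (hSpos.mono fun _ h => h.le) hβ0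
      (hβα.trans_le hα1), h_mellin, ← ENNReal.ofReal_mul (by positivity),
    ENNReal.toReal_ofReal (by positivity)]
  field_simp
end

section
/- For 0 < α < 1, the function v_α(x) = sin(πα) x^{α−1} / (π [1 + x^{2α} + 2 x^α cos(πα)]) is a probability density on (0,∞): it is nonnegative and ∫_0^∞ v_α(x) dx = 1. -/
/-!
Completing the square, `1 + x^{2α} + 2 x^α cos θ = (x^α + cos θ)² + sin² θ`, and the substitution
`u = x^α` turn `∫_0^∞ sin θ x^{α-1} / (1 + x^{2α} + 2 x^α cos θ) dx` into `α⁻¹` times a Cauchy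
integral `∫_0^∞ sin θ / ((u + cos θ)² + sin² θ) du`, which the primitive `arctan ((u + cos θ) / sin θ)`
evaluates to `π/2 - arctan (cot θ) = θ`. With `θ = πα` the total mass is `πα / α / π = 1`.
-/

open MeasureTheory Real Set Filter

theorem one_add_rpow_two_mul_add_eq {x : ℝ} (hx : 0 ≤ x) (α θ : ℝ) :
    1 + x ^ (2 * α) + 2 * x ^ α * cos θ = (x ^ α + cos θ) ^ 2 + sin θ ^ 2 := by
  rw [mul_comm 2 α, rpow_mul hx, rpow_two]
  linear_combination -sin_sq_add_cos_sq θ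

theorem hasDerivAt_inv_mul_arctan_add_div {s : ℝ} (hs : s ≠ 0) (c u : ℝ) :
    HasDerivAt (fun u => s⁻¹ * arctan ((u + c) / s)) (1 / ((u + c) ^ 2 + s ^ 2)) u := by
  have hinner : HasDerivAt (fun u => (u + c) / s) (1 / s) u := by
    simpa using ((hasDerivAt_id u).add_const c).div_const s
  refine (((hasDerivAt_arctan _).comp u hinner).const_mul s⁻¹).congr_deriv ?_
  have : 1 + ((u + c) / s) ^ 2 ≠ 0 := by positivity
  field_simp
  ring

theorem integral_Ioi_one_div_add_sq_add_sq {s : ℝ} (hs : 0 < s) (c : ℝ) :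
    ∫ u in Ioi 0, 1 / ((u + c) ^ 2 + s ^ 2) = (π / 2 - arctan (c / s)) / s := by
  have hlim : Tendsto (fun u => s⁻¹ * arctan ((u + c) / s)) atTop (nhds (s⁻¹ * (π / 2))) :=
    ((tendsto_nhds_of_tendsto_nhdsWithin tendsto_arctan_atTop).comp
      ((tendsto_atTop_add_const_right _ c tendsto_id).atTop_div_const hs)).const_mul _
  rw [integral_Ioi_of_hasDerivAt_of_nonneg'
    (fun u _ => hasDerivAt_inv_mul_arctan_add_div hs.ne' c u) (fun u _ => by positivity) hlim]
  simp only [zero_add]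
  ring

theorem arctan_cos_div_sin {θ : ℝ} (h0 : 0 < θ) (hπ : θ < π) :
    arctan (cos θ / sin θ) = π / 2 - θ := by
  rw [← inv_div, ← tan_eq_sin_div_cos, ← tan_pi_div_two_sub, arctan_tan] <;> linarith

theorem integral_Ioi_sin_div_add_cos_sq_add_sin_sq {θ : ℝ} (h0 : 0 < θ) (hπ : θ < π) :
    ∫ u in Ioi 0, sin θ / ((u + cos θ) ^ 2 + sin θ ^ 2) = θ := by
  have hsin := sin_pos_of_pos_of_lt_pi h0 hπ
  simp_rw [div_eq_mul_one_div (sin θ)]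
  rw [integral_const_mul, integral_Ioi_one_div_add_sq_add_sq hsin, arctan_cos_div_sin h0 hπ]
  field_simp
  ring

theorem integral_Ioi_sin_mul_rpow_sub_one_div {α θ : ℝ} (hα : α ≠ 0) (h0 : 0 < θ) (hπ : θ < π) :
    ∫ x in Ioi 0, sin θ * x ^ (α - 1) / (1 + x ^ (2 * α) + 2 * x ^ α * cos θ) = θ / |α| := by
  set g : ℝ → ℝ := fun u => sin θ / ((u + cos θ) ^ 2 + sin θ ^ 2)
  have hsin := sin_pos_of_pos_of_lt_pi h0 hπ
  calc ∫ x in Ioi 0, sin θ * x ^ (α - 1) / (1 + x ^ (2 * α) + 2 * x ^ α * cos θ)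
      = |α|⁻¹ * ∫ x in Ioi 0, (|α| * x ^ (α - 1)) • g (x ^ α) := by
        rw [← integral_const_mul]
        refine setIntegral_congr_fun measurableSet_Ioi fun x hx => ?_
        have : (x ^ α + cos θ) ^ 2 + sin θ ^ 2 ≠ 0 := by positivity
        simp only [g, smul_eq_mul, one_add_rpow_two_mul_add_eq (le_of_lt hx)]
        field_simp
    _ = θ / |α| := by
        rw [integral_comp_rpow_Ioi g hα, integral_Ioi_sin_div_add_cos_sq_add_sin_sq h0 hπ,
          inv_mul_eq_div]

/-- For `0 < α < 1`, the function
`v_α(x) = sin(πα) x^{α-1} / (π [1 + x^{2α} + 2 x^α cos(πα)])`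
is a probability density on `(0, ∞)`. -/
theorem ratio_stable_density (α : ℝ) (hα0 : 0 < α) (hα1 : α < 1) :
    (∀ x : ℝ, 0 < x →
        0 ≤ Real.sin (Real.pi * α) * x ^ (α - 1) /
          (Real.pi * (1 + x ^ (2 * α) + 2 * x ^ α * Real.cos (Real.pi * α)))) ∧
      ∫ x in Set.Ioi (0 : ℝ),
          Real.sin (Real.pi * α) * x ^ (α - 1) /
            (Real.pi * (1 + x ^ (2 * α) + 2 * x ^ α * Real.cos (Real.pi * α))) = 1 := by
  have hθ0 : 0 < π * α := by positivity
  have hθπ : π * α < π := mul_lt_of_lt_one_right pi_pos hα1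
  have hsin := sin_pos_of_pos_of_lt_pi hθ0 hθπ
  refine ⟨fun x hx => ?_, ?_⟩
  · rw [one_add_rpow_two_mul_add_eq hx.le]
    positivity
  · simp_rw [div_mul_eq_div_div_swap]
    rw [integral_div, integral_Ioi_sin_mul_rpow_sub_one_div hα0.ne' hθ0 hθπ, abs_of_pos hα0]
    field_simp
end

section
/- Let α ∈ (0,2]. If X is standard normal and M_{α/2} is an independent Mittag-Leffler random variable with parameter α/2 (Laplace transform 1/(1+s^{α/2})), then X·√(2 M_{α/2}) has the Linnik distribution with parameter α, i.e., its characteristic function is 1/(1 + |t|^α) for t ∈ ℝ. -/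
open MeasureTheory ProbabilityTheory Real Set

/-!
Conditionally on `M = m`, the variable `X √(2m)` is centred Gaussian with variance `2m`, so its
characteristic function at `t` is `exp (-t² m)`. Integrating over the law of `M` turns the
characteristic function of `X √(2M)` into the Laplace transform of `M` at `t²`, which is
`1 / (1 + (t²)^(α/2)) = 1 / (1 + |t|^α)`.
-/

open Complex in
lemma integral_cexp_mul_sqrt_two_mul_gaussianReal (t : ℝ) {m : ℝ} (hm : 0 ≤ m) :
    ∫ x, cexp (I * t * (x * √(2 * m))) ∂gaussianReal 0 1 = (rexp (-(t ^ 2 * m)) : ℂ) := by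
  have hsq : (t * √(2 * m)) ^ 2 = 2 * (t ^ 2 * m) := by
    rw [mul_pow, Real.sq_sqrt (by positivity)]; ring
  calc ∫ x, cexp (I * t * (x * √(2 * m))) ∂gaussianReal 0 1
      = charFun (gaussianReal 0 1) (t * √(2 * m)) := by
        rw [charFun_apply_real]; congr 1 with x; congr 1; push_cast; ring
    _ = (rexp (-(t ^ 2 * m)) : ℂ) := by
        rw [charFun_gaussianReal, ← ofReal_pow, hsq]; push_cast; congr 1; ring

lemma ProbabilityTheory.IndepFun.integral_comp_prodMk_eq_integral_integral {Ω 𝓧 𝓨 E : Type*}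
    {mΩ : MeasurableSpace Ω} {m𝓧 : MeasurableSpace 𝓧} {m𝓨 : MeasurableSpace 𝓨}
    [NormedAddCommGroup E] [NormedSpace ℝ E]
    {μ : Measure Ω} [IsFiniteMeasure μ] {X : Ω → 𝓧} {Y : Ω → 𝓨} (hXY : X ⟂ᵢ[μ] Y)
    (hX : AEMeasurable X μ) (hY : AEMeasurable Y μ) {f : 𝓧 × 𝓨 → E}
    (hf : Integrable f ((μ.map X).prod (μ.map Y))) :
    ∫ ω, f (X ω, Y ω) ∂μ = ∫ y, ∫ x, f (x, y) ∂μ.map X ∂μ.map Y := by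
  have hlaw := hXY.map_prod_eq_prod_map_map hX hY
  rw [← integral_prod_symm f hf, ← hlaw, integral_map (hX.prodMk hY) (hlaw ▸ hf.1)]

lemma sq_rpow_div_two (t α : ℝ) : (t ^ 2) ^ (α / 2) = |t| ^ α := by
  rw [← sq_abs, ← Real.rpow_natCast, ← Real.rpow_mul (abs_nonneg t)]
  congr 1
  push_cast
  ring

theorem linnik_normal_mittag_leffler_mixture_general (α : ℝ)
    {Ω : Type*} [MeasurableSpace Ω] (P : Measure Ω) [IsProbabilityMeasure P]
    (X M : Ω → ℝ) (hX : Measurable X) (hM : Measurable M)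
    (hXnorm : Measure.map X P = ProbabilityTheory.gaussianReal 0 1)
    (hMpos : ∀ᵐ ω ∂P, 0 < M ω)
    (hMLaplace : ∀ s : ℝ, 0 ≤ s →
      ∫ ω, Real.exp (-(s * M ω)) ∂P = 1 / (1 + s ^ (α / 2)))
    (hindep : IndepFun X M P) :
    ∀ t : ℝ,
      ∫ ω, Complex.exp (Complex.I * t * (X ω * Real.sqrt (2 * M ω))) ∂P =
        ((1 / (1 + |t| ^ α) : ℝ) : ℂ) := by
  intro t
  have hf : Integrable (fun p : ℝ × ℝ ↦ Complex.exp (Complex.I * t * (p.1 * √(2 * p.2))))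
      ((P.map X).prod (P.map M)) := by
    refine .of_bound (by fun_prop) 1 (.of_forall fun p ↦ ?_)
    rw [show Complex.I * t * (p.1 * √(2 * p.2)) = Complex.I * ↑(t * (p.1 * √(2 * p.2))) by
      push_cast; ring]
    exact (Complex.norm_exp_I_mul_ofReal _).le
  have hconditional : ∀ᵐ m ∂P.map M, ∫ x, Complex.exp (Complex.I * t * (x * √(2 * m))) ∂P.map X
      = (rexp (-(t ^ 2 * m)) : ℂ) := by
    filter_upwards [(ae_map_iff hM.aemeasurable measurableSet_Ioi).2 hMpos] with m hm
    rw [hXnorm, integral_cexp_mul_sqrt_two_mul_gaussianReal t hm.le]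
  rw [hindep.integral_comp_prodMk_eq_integral_integral hX.aemeasurable hM.aemeasurable hf,
    integral_congr_ae hconditional, integral_complex_ofReal,
    integral_map hM.aemeasurable (by fun_prop), hMLaplace _ (sq_nonneg t), sq_rpow_div_two]

/-- For `α ∈ (0, 2]`: if `X` is standard normal and `M` is an independent Mittag-Leffler
random variable with parameter `α/2`, then `X · √(2M)` has the Linnik distribution with
parameter `α`, i.e. its characteristic function is `1/(1 + |t|^α)`. -/
theorem linnik_normal_mittag_leffler_mixture (α : ℝ) (hα0 : 0 < α) (hα2 : α ≤ 2)
    {Ω : Type*} [MeasurableSpace Ω] (P : Measure Ω) [IsProbabilityMeasure P]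
    (X M : Ω → ℝ) (hX : Measurable X) (hM : Measurable M)
    (hXnorm : Measure.map X P = ProbabilityTheory.gaussianReal 0 1)
    (hMpos : ∀ᵐ ω ∂P, 0 < M ω)
    (hMLaplace : ∀ s : ℝ, 0 ≤ s →
      ∫ ω, Real.exp (-(s * M ω)) ∂P = 1 / (1 + s ^ (α / 2)))
    (hindep : IndepFun X M P) :
    ∀ t : ℝ,
      ∫ ω, Complex.exp (Complex.I * t * (X ω * Real.sqrt (2 * M ω))) ∂P =
        ((1 / (1 + |t| ^ α) : ℝ) : ℂ) :=
  linnik_normal_mittag_leffler_mixture_general α P X M hX hM hXnorm hMpos hMLaplace hindep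
end

section
/- Let r ∈ (0,1], α ∈ (0,1], μ > 0, and let N_{r,α,μ} be a random variable with the generalized negative binomial distribution P(N_{r,α,μ} = k) = (1/k!)∫_0^∞ e^{−z} z^k g*(z; r, α, μ) dz. Then this distribution is mixed geometric: P(N_{r,α,μ} = k) = ∫_0^1 y(1−y)^k dP(Y_{r,α,μ} < y) for k = 0,1,2,..., where Y_{r,α,μ} = S·Z^{1/α} / (1 + S·Z^{1/α}), with S = S_{α,1} a one-sided strictly stable random variable and Z = Z_{r,μ} an independent random variable with Gleser density p(z; r, μ). -/
/-!
Put `T = S Z^{1/α}`. The geometric law with success probability `1/(1+T)` is the Poisson law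
mixed by an exponential law of mean `T`, so by Tonelli
`E[T/(1+T)^{k+1}] = (1/k!) ∫ w^k e^{-w} E[T e^{-wT}] dw`, and it remains to see that
`E[T e^{-wT}] = g*(w; r, α, μ)`. Differentiating the Laplace transform of `S` gives
`E[S e^{-aS}] = α a^{α-1} e^{-a^α}`; integrating first over `S` at fixed `Z` turns this into
`E[T e^{-wT}] = α w^{α-1} E[Z e^{-w^α Z}]`, and the Gleser density is exactly the one with
`E[Z e^{-uZ}] = μ^r e^{-uμ} u^{r-1} / Γ(r)`.
-/

open MeasureTheory ProbabilityTheory Real Set Filter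
open scoped ENNReal

theorem lintegral_rpow_mul_exp_neg_mul_Ioi {a b : ℝ} (ha : 0 < a) (hb : 0 < b) :
    ∫⁻ t in Ioi 0, ENNReal.ofReal (t ^ (a - 1) * exp (-(b * t))) =
      ENNReal.ofReal ((1 / b) ^ a * Gamma a) := by
  have hint : IntegrableOn (fun t : ℝ => t ^ (a - 1) * exp (-(b * t))) (Ioi 0) := by
    simpa [rpow_one] using
      integrableOn_rpow_mul_exp_neg_mul_rpow (p := 1) (by linarith : -1 < a - 1) one_pos hb
  rw [← integral_rpow_mul_exp_neg_mul_Ioi ha hb, ofReal_integral_eq_lintegral_ofReal hint]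
  filter_upwards [ae_restrict_mem measurableSet_Ioi] with t ht
  exact mul_nonneg (rpow_nonneg (le_of_lt ht) _) (exp_pos _).le

theorem ofReal_div_one_add_pow_eq_lintegral {t : ℝ} (ht : 0 ≤ t) (k : ℕ) :
    ENNReal.ofReal (t / (1 + t) ^ (k + 1)) =
      ∫⁻ w in Ioi 0, ENNReal.ofReal (w ^ k * exp (-w) / k.factorial) *
        ENNReal.ofReal (t * exp (-(w * t))) := by
  have hb : 0 < 1 + t := by linarith
  have hk : ((k + 1 : ℕ) : ℝ) - 1 = k := by push_cast; ring
  calc ENNReal.ofReal (t / (1 + t) ^ (k + 1))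
      = ENNReal.ofReal (t / k.factorial) *
          ENNReal.ofReal ((1 / (1 + t)) ^ ((k + 1 : ℕ) : ℝ) * Gamma ((k + 1 : ℕ) : ℝ)) := by
        rw [← ENNReal.ofReal_mul (by positivity), rpow_natCast, Nat.cast_succ,
          Gamma_nat_eq_factorial, one_div_pow]
        congr 1
        field_simp
    _ = ∫⁻ w in Ioi 0, ENNReal.ofReal (t / k.factorial) *
          ENNReal.ofReal (w ^ (((k + 1 : ℕ) : ℝ) - 1) * exp (-((1 + t) * w))) := by
        rw [lintegral_const_mul' _ _ ENNReal.ofReal_ne_top,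
          lintegral_rpow_mul_exp_neg_mul_Ioi (by positivity) hb]
    _ = _ := by
        refine setLIntegral_congr_fun measurableSet_Ioi fun w hw => ?_
        have hw : 0 < w := hw
        rw [← ENNReal.ofReal_mul (by positivity), ← ENNReal.ofReal_mul (by positivity), hk,
          rpow_natCast, show -((1 + t) * w) = -w + -(w * t) by ring, exp_add]
        congr 1
        ring

theorem div_one_add_mul_one_sub_div_one_add_pow {t : ℝ} (ht : 1 + t ≠ 0) (k : ℕ) :
    t / (1 + t) * (1 - t / (1 + t)) ^ k = t / (1 + t) ^ (k + 1) := by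
  rw [show 1 - t / (1 + t) = 1 / (1 + t) by field_simp; ring, div_pow, one_pow,
    div_mul_div_comm, mul_one, pow_succ']

noncomputable def gleserPDF (r μ z : ℝ) : ℝ :=
  μ ^ r / (Gamma (1 - r) * Gamma r) * (if μ ≤ z then 1 / ((z - μ) ^ r * z) else 0)

noncomputable def gleserMeasure (r μ : ℝ) : Measure ℝ :=
  volume.withDensity fun z => ENNReal.ofReal (gleserPDF r μ z)

theorem measurable_gleserPDF (r μ : ℝ) : Measurable (gleserPDF r μ) :=
  measurable_const.mul <| Measurable.ite measurableSet_Ici (by fun_prop) measurable_const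

theorem ae_le_gleserMeasure (r μ : ℝ) : ∀ᵐ z ∂gleserMeasure r μ, μ ≤ z := by
  rw [gleserMeasure, ae_withDensity_iff (measurable_gleserPDF r μ).ennreal_ofReal]
  refine ae_of_all _ fun z hz => ?_
  by_contra h
  simp [gleserPDF, h] at hz

-- `Gamma 0 = 0` in Mathlib, so the normalising constant, and with it the density, vanishes.
theorem gleserMeasure_one (μ : ℝ) : gleserMeasure 1 μ = 0 := by
  simp [gleserMeasure, gleserPDF]

-- The substitution `z = μ + t` turns this into a Gamma integral of order `1 - r`.
theorem lintegral_mul_exp_neg_mul_gleserMeasure {r μ u : ℝ} (hr0 : 0 < r) (hr1 : r < 1)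
    (hμ : 0 < μ) (hu : 0 < u) :
    ∫⁻ z, ENNReal.ofReal (z * exp (-(u * z))) ∂gleserMeasure r μ =
      ENNReal.ofReal (μ ^ r * exp (-(u * μ)) * u ^ (r - 1) / Gamma r) := by
  have hΓ := Gamma_pos_of_pos (sub_pos.mpr hr1)
  set C := μ ^ r / (Gamma (1 - r) * Gamma r) * exp (-(u * μ))
  have hC : 0 ≤ C := by positivity
  have hshift : ∀ z, ENNReal.ofReal (gleserPDF r μ z) * ENNReal.ofReal (z * exp (-(u * z))) =
      (Ioi 0).indicator (fun t => ENNReal.ofReal C *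
        ENNReal.ofReal (t ^ ((1 - r) - 1) * exp (-(u * t)))) (z - μ) := by
    intro z
    by_cases hz : μ < z
    · have hz0 : 0 < z := hμ.trans hz
      have hzμ : 0 < z - μ := sub_pos.mpr hz
      rw [indicator_of_mem (mem_Ioi.mpr hzμ), ← ENNReal.ofReal_mul
        (by unfold gleserPDF; rw [if_pos hz.le]; positivity), ← ENNReal.ofReal_mul hC]
      congr 1
      rw [gleserPDF, if_pos hz.le, sub_sub_cancel_left, rpow_neg hzμ.le,
        show -(u * z) = -(u * μ) + -(u * (z - μ)) by ring, exp_add]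
      simp only [C]
      field_simp
    · rw [indicator_of_notMem (by simpa using hz)]
      rcases (not_lt.mp hz).eq_or_lt with rfl | hlt
      · simp [gleserPDF, zero_rpow hr0.ne']
      · simp [gleserPDF, not_le.mpr hlt]
  rw [gleserMeasure, lintegral_withDensity_eq_lintegral_mul _
    (measurable_gleserPDF r μ).ennreal_ofReal (by fun_prop)]
  simp only [Pi.mul_apply, hshift]
  rw [lintegral_sub_right_eq_self, lintegral_indicator measurableSet_Ioi,
    lintegral_const_mul' _ _ ENNReal.ofReal_ne_top,
    lintegral_rpow_mul_exp_neg_mul_Ioi (sub_pos.mpr hr1) hu, ← ENNReal.ofReal_mul hC,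
    one_div, inv_rpow hu.le, ← rpow_neg hu.le, neg_sub]
  congr 1
  simp only [C]
  field_simp

noncomputable def genGammaPDF (r α μ z : ℝ) : ℝ :=
  α * μ ^ r * z ^ (α * r - 1) * exp (-(μ * z ^ α)) / Gamma r

@[fun_prop]
theorem measurable_genGammaPDF (r α μ : ℝ) : Measurable (genGammaPDF r α μ) := by
  unfold genGammaPDF
  fun_prop

theorem genGammaPDF_nonneg {r α μ z : ℝ} (hr : 0 < r) (hα : 0 ≤ α) (hμ : 0 ≤ μ) (hz : 0 ≤ z) :
    0 ≤ genGammaPDF r α μ z := by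
  have := Gamma_pos_of_pos hr
  unfold genGammaPDF
  positivity

theorem genGammaPDF_eq {r α μ w : ℝ} (hw : 0 < w) :
    genGammaPDF r α μ w =
      α * w ^ (α - 1) * (μ ^ r * exp (-(w ^ α * μ)) * (w ^ α) ^ (r - 1) / Gamma r) := by
  rw [genGammaPDF, ← rpow_mul hw.le, show α * r - 1 = (α - 1) + α * (r - 1) by ring,
    rpow_add hw, mul_comm (w ^ α) μ]
  ring

section RandomVariables

variable {Ω : Type*} [MeasurableSpace Ω] {P : Measure Ω}

theorem lintegral_ofReal_div_one_add_pow [SFinite P] {T : Ω → ℝ} (hT : Measurable T)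
    (hT0 : ∀ᵐ ω ∂P, 0 ≤ T ω) (k : ℕ) :
    ∫⁻ ω, ENNReal.ofReal (T ω / (1 + T ω) ^ (k + 1)) ∂P =
      ∫⁻ w in Ioi 0, ENNReal.ofReal (w ^ k * exp (-w) / k.factorial) *
        ∫⁻ ω, ENNReal.ofReal (T ω * exp (-(w * T ω))) ∂P := by
  have hmeas : Measurable fun p : Ω × ℝ => ENNReal.ofReal (p.2 ^ k * exp (-p.2) / k.factorial) *
      ENNReal.ofReal (T p.1 * exp (-(p.2 * T p.1))) := by fun_prop
  rw [lintegral_congr_ae (hT0.mono fun ω h => ofReal_div_one_add_pow_eq_lintegral h k),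
    lintegral_lintegral_swap hmeas.aemeasurable]
  simp_rw [lintegral_const_mul' _ _ ENNReal.ofReal_ne_top]

theorem integral_div_one_add_pow_eq_setIntegral [SFinite P] {T : Ω → ℝ} {g : ℝ → ℝ}
    (hT : Measurable T) (hT0 : ∀ᵐ ω ∂P, 0 ≤ T ω) (hg : Measurable g)
    (hg0 : ∀ w ∈ Ioi (0 : ℝ), 0 ≤ g w)
    (hTg : ∀ w, 0 < w → ∫⁻ ω, ENNReal.ofReal (T ω * exp (-(w * T ω))) ∂P = ENNReal.ofReal (g w))
    (k : ℕ) :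
    ∫ ω, T ω / (1 + T ω) ^ (k + 1) ∂P = ∫ w in Ioi 0, w ^ k * exp (-w) / k.factorial * g w := by
  have hpoisson : ∀ w ∈ Ioi (0 : ℝ), 0 ≤ w ^ k * exp (-w) / k.factorial := fun w hw => by
    have : 0 < w := hw
    positivity
  rw [integral_eq_lintegral_of_nonneg_ae (hT0.mono fun _ h => by positivity)
      (Measurable.aestronglyMeasurable (by fun_prop)),
    integral_eq_lintegral_of_nonneg_ae ((ae_restrict_mem measurableSet_Ioi).mono
      fun w hw => mul_nonneg (hpoisson w hw) (hg0 w hw)) (Measurable.aestronglyMeasurable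
      (by fun_prop)), lintegral_ofReal_div_one_add_pow hT hT0]
  refine congrArg _ (setLIntegral_congr_fun measurableSet_Ioi fun w hw => ?_)
  rw [hTg w hw, ENNReal.ofReal_mul (hpoisson w hw)]

theorem hasDerivAt_integral_exp_neg_mul [IsFiniteMeasure P] {S : Ω → ℝ} (hS : Measurable S)
    (hS0 : ∀ᵐ ω ∂P, 0 ≤ S ω) {a : ℝ} (ha : 0 < a) :
    Integrable (fun ω => S ω * exp (-(a * S ω))) P ∧
      HasDerivAt (fun t => ∫ ω, exp (-(t * S ω)) ∂P) (-∫ ω, S ω * exp (-(a * S ω)) ∂P) a := by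
  have hexp : Integrable (fun ω => exp (-(a * S ω))) P := by
    refine (integrable_const (1 : ℝ)).mono' (by fun_prop) ?_
    filter_upwards [hS0] with ω hω
    rw [norm_of_nonneg (exp_pos _).le, exp_le_one_iff, neg_nonpos]
    positivity
  have hball : Metric.ball a (a / 2) ⊆ Ioi (a / 2) := fun t ht => by
    rw [Metric.mem_ball, Real.dist_eq, abs_lt] at ht
    exact mem_Ioi.mpr (by linarith)
  have hbound : ∀ᵐ ω ∂P, ∀ t ∈ Metric.ball a (a / 2),
      ‖-(S ω * exp (-(t * S ω)))‖ ≤ 2 / a * exp (-1) := by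
    filter_upwards [hS0] with ω hω t ht
    have ht' : a / 2 < t := hball ht
    rw [norm_neg, norm_of_nonneg (by positivity)]
    calc S ω * exp (-(t * S ω)) ≤ S ω * exp (-(a / 2 * S ω)) := by gcongr
      _ = 2 / a * ((a / 2 * S ω) * exp (-(a / 2 * S ω))) := by field_simp
      _ ≤ 2 / a * exp (-1) := by gcongr; exact mul_exp_neg_le_exp_neg_one _
  have hderiv : ∀ᵐ ω ∂P, ∀ t ∈ Metric.ball a (a / 2),
      HasDerivAt (fun u => exp (-(u * S ω))) (-(S ω * exp (-(t * S ω)))) t := by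
    refine ae_of_all _ fun ω t _ => ?_
    have h : HasDerivAt (fun u : ℝ => -(u * S ω)) (-S ω) t := (hasDerivAt_mul_const (S ω)).neg
    have := h.exp
    rwa [mul_neg, mul_comm (exp _)] at this
  obtain ⟨hint, hderivAt⟩ := hasDerivAt_integral_of_dominated_loc_of_deriv_le
    (Metric.ball_mem_nhds a (half_pos ha)) (Eventually.of_forall fun t => by fun_prop) hexp
    (by fun_prop) hbound (integrable_const _) hderiv
  exact ⟨by simpa using hint.neg, by simpa [integral_neg] using hderivAt⟩

theorem lintegral_mul_exp_neg_mul_of_integral_exp_neg_mul_eq [IsFiniteMeasure P] {S : Ω → ℝ}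
    (hS : Measurable S) (hS0 : ∀ᵐ ω ∂P, 0 ≤ S ω) {α : ℝ}
    (hL : ∀ s, 0 ≤ s → ∫ ω, exp (-(s * S ω)) ∂P = exp (-(s ^ α))) {a : ℝ} (ha : 0 < a) :
    ∫⁻ ω, ENNReal.ofReal (S ω * exp (-(a * S ω))) ∂P =
      ENNReal.ofReal (α * a ^ (α - 1) * exp (-(a ^ α))) := by
  obtain ⟨hint, hderiv⟩ := hasDerivAt_integral_exp_neg_mul hS hS0 ha
  have hstable : HasDerivAt (fun t => ∫ ω, exp (-(t * S ω)) ∂P)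
      (exp (-(a ^ α)) * -(α * a ^ (α - 1))) a :=
    (hasDerivAt_rpow_const (Or.inl ha.ne')).neg.exp.congr_of_eventuallyEq <| by
      filter_upwards [Ioi_mem_nhds ha] with t ht using hL t ht.le
  rw [← ofReal_integral_eq_lintegral_ofReal hint (hS0.mono fun ω h => by positivity),
    neg_eq_iff_eq_neg.mp (hderiv.unique hstable)]
  congr 1
  ring

theorem lintegral_mul_rpow_mul_exp_neg_of_indepFun [IsFiniteMeasure P] {S Z : Ω → ℝ}
    (hS : Measurable S) (hZ : Measurable Z) (hind : IndepFun S Z P) (hZ0 : ∀ᵐ ω ∂P, 0 < Z ω)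
    {α : ℝ} (hα : α ≠ 0)
    (hSlap : ∀ a, 0 < a → ∫⁻ ω, ENNReal.ofReal (S ω * exp (-(a * S ω))) ∂P =
      ENNReal.ofReal (α * a ^ (α - 1) * exp (-(a ^ α))))
    {w : ℝ} (hw : 0 < w) :
    ∫⁻ ω, ENNReal.ofReal (S ω * Z ω ^ (1 / α) * exp (-(w * (S ω * Z ω ^ (1 / α))))) ∂P =
      ∫⁻ ω, ENNReal.ofReal (α * w ^ (α - 1) * (Z ω * exp (-(w ^ α * Z ω)))) ∂P := by
  have hpair : P.map (fun ω => (S ω, Z ω)) = (P.map S).prod (P.map Z) :=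
    (indepFun_iff_map_prod_eq_prod_map_map hS.aemeasurable hZ.aemeasurable).mp hind
  have hinner : ∀ z, 0 < z → ∫⁻ s, ENNReal.ofReal (s * z ^ (1 / α) *
      exp (-(w * (s * z ^ (1 / α))))) ∂P.map S =
        ENNReal.ofReal (α * w ^ (α - 1) * (z * exp (-(w ^ α * z)))) := by
    intro z hz
    have hzα : 0 < z ^ (1 / α) := rpow_pos_of_pos hz _
    have hz1 : z ^ (1 / α * (α - 1)) * z ^ (1 / α) = z := by
      rw [← rpow_add hz, show 1 / α * (α - 1) + 1 / α = 1 by field_simp; ring, rpow_one]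
    calc _ = ∫⁻ ω, ENNReal.ofReal (z ^ (1 / α)) *
          ENNReal.ofReal (S ω * exp (-(w * z ^ (1 / α) * S ω))) ∂P := by
          rw [lintegral_map (by fun_prop) hS]
          congr with ω
          rw [← ENNReal.ofReal_mul hzα.le]
          ring_nf
      _ = _ := by
          rw [lintegral_const_mul' _ _ ENNReal.ofReal_ne_top, hSlap _ (mul_pos hw hzα),
            ← ENNReal.ofReal_mul hzα.le, mul_rpow hw.le hzα.le, mul_rpow hw.le hzα.le,
            ← rpow_mul hz.le, ← rpow_mul hz.le, one_div_mul_cancel hα, rpow_one]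
          congr 1
          linear_combination α * w ^ (α - 1) * exp (-(w ^ α * z)) * hz1
  calc _ = ∫⁻ p, ENNReal.ofReal (p.1 * p.2 ^ (1 / α) * exp (-(w * (p.1 * p.2 ^ (1 / α)))))
        ∂(P.map S).prod (P.map Z) := by
        rw [← hpair, lintegral_map (by fun_prop) (by fun_prop)]
    _ = ∫⁻ z, ∫⁻ s, ENNReal.ofReal (s * z ^ (1 / α) * exp (-(w * (s * z ^ (1 / α)))))
        ∂P.map S ∂P.map Z := lintegral_prod_symm' _ (by fun_prop)
    _ = ∫⁻ z, ENNReal.ofReal (α * w ^ (α - 1) * (z * exp (-(w ^ α * z)))) ∂P.map Z := by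
        refine lintegral_congr_ae ?_
        filter_upwards [(ae_map_iff hZ.aemeasurable measurableSet_Ioi).mpr hZ0] with z hz
        exact hinner z hz
    _ = _ := lintegral_map (by fun_prop) hZ

theorem lt_one_of_map_eq_gleserMeasure [IsProbabilityMeasure P] {Z : Ω → ℝ} {r μ : ℝ}
    (hZ : AEMeasurable Z P) (hZlaw : P.map Z = gleserMeasure r μ) (hr : r ≤ 1) : r < 1 := by
  refine hr.lt_of_ne fun h => ?_
  have := Measure.isProbabilityMeasure_map hZ
  rw [hZlaw, h, gleserMeasure_one] at this
  exact IsProbabilityMeasure.ne_zero (0 : Measure ℝ) rfl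

theorem ae_le_of_map_eq_gleserMeasure {Z : Ω → ℝ} {r μ : ℝ} (hZ : AEMeasurable Z P)
    (hZlaw : P.map Z = gleserMeasure r μ) : ∀ᵐ ω ∂P, μ ≤ Z ω :=
  ae_of_ae_map hZ (hZlaw ▸ ae_le_gleserMeasure r μ)

theorem lintegral_mul_exp_neg_mul_eq_genGammaPDF [IsFiniteMeasure P] {S Z : Ω → ℝ}
    {r α μ : ℝ} (hr0 : 0 < r) (hr1 : r < 1) (hα : 0 < α) (hμ : 0 < μ) (hS : Measurable S)
    (hZ : Measurable Z) (hind : IndepFun S Z P) (hS0 : ∀ᵐ ω ∂P, 0 ≤ S ω)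
    (hSlap : ∀ s, 0 ≤ s → ∫ ω, exp (-(s * S ω)) ∂P = exp (-(s ^ α)))
    (hZlaw : P.map Z = gleserMeasure r μ) {w : ℝ} (hw : 0 < w) :
    ∫⁻ ω, ENNReal.ofReal (S ω * Z ω ^ (1 / α) * exp (-(w * (S ω * Z ω ^ (1 / α))))) ∂P =
      ENNReal.ofReal (genGammaPDF r α μ w) := by
  have hZ0 : ∀ᵐ ω ∂P, 0 < Z ω :=
    (ae_le_of_map_eq_gleserMeasure hZ.aemeasurable hZlaw).mono fun _ h => hμ.trans_le h
  have hαw : 0 ≤ α * w ^ (α - 1) := by positivity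
  rw [lintegral_mul_rpow_mul_exp_neg_of_indepFun hS hZ hind hZ0 hα.ne'
      (fun a ha => lintegral_mul_exp_neg_mul_of_integral_exp_neg_mul_eq hS hS0 hSlap ha) hw]
  simp_rw [ENNReal.ofReal_mul hαw]
  rw [lintegral_const_mul' _ _ ENNReal.ofReal_ne_top,
    ← lintegral_map (f := fun z => ENNReal.ofReal (z * exp (-(w ^ α * z)))) (by fun_prop) hZ,
    hZlaw, lintegral_mul_exp_neg_mul_gleserMeasure hr0 hr1 hμ (by positivity),
    ← ENNReal.ofReal_mul hαw, genGammaPDF_eq hw]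

end RandomVariables

theorem gnb_is_mixed_geometric_general (r α μ : ℝ)
    (hr0 : 0 < r) (hr1 : r ≤ 1) (hα0 : 0 < α) (hμ : 0 < μ)
    {Ω : Type*} [MeasurableSpace Ω] (P : Measure Ω) [IsProbabilityMeasure P]
    (S Z : Ω → ℝ) (hS : Measurable S) (hZ : Measurable Z)
    (hSpos : ∀ᵐ ω ∂P, 0 < S ω)
    (hSLaplace : ∀ s : ℝ, 0 ≤ s →
      ∫ ω, Real.exp (-(s * S ω)) ∂P = Real.exp (-(s ^ α)))
    (hZdens : Measure.map Z P = volume.withDensity fun z =>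
      ENNReal.ofReal
        (μ ^ r / (Real.Gamma (1 - r) * Real.Gamma r) *
          (if μ ≤ z then 1 / ((z - μ) ^ r * z) else 0)))
    (hindep : IndepFun S Z P) :
    ∀ k : ℕ,
      (1 / k.factorial : ℝ) *
          ∫ z in Set.Ioi (0 : ℝ),
            Real.exp (-z) * z ^ k *
              (α * μ ^ r * z ^ (α * r - 1) * Real.exp (-(μ * z ^ α)) / Real.Gamma r) =
        ∫ ω,
          (S ω * Z ω ^ (1 / α) / (1 + S ω * Z ω ^ (1 / α))) *
            (1 - S ω * Z ω ^ (1 / α) / (1 + S ω * Z ω ^ (1 / α))) ^ k ∂P := by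
  intro k
  have hZlaw : P.map Z = gleserMeasure r μ := hZdens
  have hr : r < 1 := lt_one_of_map_eq_gleserMeasure hZ.aemeasurable hZlaw hr1
  have hT0 : ∀ᵐ ω ∂P, 0 ≤ S ω * Z ω ^ (1 / α) := by
    filter_upwards [hSpos, ae_le_of_map_eq_gleserMeasure hZ.aemeasurable hZlaw] with ω hSω hZω
    have : 0 ≤ Z ω := hμ.le.trans hZω
    positivity
  calc _ = ∫ w in Ioi 0, w ^ k * exp (-w) / k.factorial * genGammaPDF r α μ w := by
        rw [← integral_const_mul]
        congr with w
        rw [genGammaPDF]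
        ring
    _ = ∫ ω, S ω * Z ω ^ (1 / α) / (1 + S ω * Z ω ^ (1 / α)) ^ (k + 1) ∂P :=
        (integral_div_one_add_pow_eq_setIntegral (by fun_prop) hT0 (by fun_prop)
          (fun w hw => genGammaPDF_nonneg hr0 hα0.le hμ.le (le_of_lt hw))
          (fun w hw => lintegral_mul_exp_neg_mul_eq_genGammaPDF hr0 hr hα0 hμ hS hZ hindep
            (hSpos.mono fun _ h => h.le) hSLaplace hZlaw hw) k).symm
    _ = _ := integral_congr_ae <| hT0.mono fun _ h =>
        (div_one_add_mul_one_sub_div_one_add_pow (by positivity) k).symm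

/-- For `r, α ∈ (0,1]` and `μ > 0`, the generalized negative binomial distribution
(mixed Poisson with generalized gamma mixing) is mixed geometric with mixing random
variable `Y = S Z^{1/α} / (1 + S Z^{1/α})`, where `S` is one-sided strictly stable with
Laplace transform `exp (-s^α)` and `Z` is independent with the Gleser density
`p(z; r, μ)`. -/
theorem gnb_is_mixed_geometric (r α μ : ℝ)
    (hr0 : 0 < r) (hr1 : r ≤ 1) (hα0 : 0 < α) (hα1 : α ≤ 1) (hμ : 0 < μ)
    {Ω : Type*} [MeasurableSpace Ω] (P : Measure Ω) [IsProbabilityMeasure P]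
    (S Z : Ω → ℝ) (hS : Measurable S) (hZ : Measurable Z)
    (hSpos : ∀ᵐ ω ∂P, 0 < S ω)
    (hSLaplace : ∀ s : ℝ, 0 ≤ s →
      ∫ ω, Real.exp (-(s * S ω)) ∂P = Real.exp (-(s ^ α)))
    (hZdens : Measure.map Z P = volume.withDensity fun z =>
      ENNReal.ofReal
        (μ ^ r / (Real.Gamma (1 - r) * Real.Gamma r) *
          (if μ ≤ z then 1 / ((z - μ) ^ r * z) else 0)))
    (hindep : IndepFun S Z P) :
    ∀ k : ℕ,
      (1 / k.factorial : ℝ) *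
          ∫ z in Set.Ioi (0 : ℝ),
            Real.exp (-z) * z ^ k *
              (α * μ ^ r * z ^ (α * r - 1) * Real.exp (-(μ * z ^ α)) / Real.Gamma r) =
        ∫ ω,
          (S ω * Z ω ^ (1 / α) / (1 + S ω * Z ω ^ (1 / α))) *
            (1 - S ω * Z ω ^ (1 / α) / (1 + S ω * Z ω ^ (1 / α))) ^ k ∂P :=
  gnb_is_mixed_geometric_general r α μ hr0 hr1 hα0 hμ P S Z hS hZ hSpos hSLaplace hZdens hindep
end
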